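/- Let a ∈ ℝ, 1 < p < ∞ and 1 ≤ q, r < ∞. Then the norm ‖·‖*_{HL^{a,r}_{p,q}} is absolutely continuous: for every f with ‖f‖*_{HL^{a,r}_{p,q}} < ∞ and every sequence (E_n) of measurable subsets of Ω such that χ_{E_n} → 0 pointwise μ-a.e., one has lim_{n→∞} ‖f·χ_{E_n}‖*_{HL^{a,r}_{p,q}} = 0. -/

import Mathlib

open MeasureTheory ENNReal Set Filter Topology

noncomputable section

variable {X : Type*}

/-- The decreasing rearrangement `f*` of `f` with respect to `μ` :
`f*(s) = inf {α ≥ 0 : μ({x : |f(x)| > α}) ≤ s}`. -/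
def rearr [MeasurableSpace X] (μ : Measure X) (f : X → ℝ) (s : ℝ) : ℝ≥0∞ :=
  sInf {α : ℝ≥0∞ | μ {x | α < ENNReal.ofReal |f x|} ≤ ENNReal.ofReal s}

/-- The averaged (maximal) rearrangement `f**(s) = (1/s)∫_0^s f*(t) dt`. -/
def rearrStar [MeasurableSpace X] (μ : Measure X) (f : X → ℝ) (s : ℝ) : ℝ≥0∞ :=
  (ENNReal.ofReal s)⁻¹ * ∫⁻ t in Set.Ioc (0 : ℝ) s, rearr μ f t

/-- The Lorentz functional built from a rearrangement-type function `R`: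
`(∫_0^∞ (t^{1/p} R(t))^r dt/t)^{1/r}` for `r < ∞`, and `sup_{t>0} t^{1/p} R(t)`
for `r = ∞` (when `p = ∞`, `1/p` is interpreted as `0`, which for `R = f*`
recovers the essential supremum of `|f|`). -/
def lorentzNormOf (R : ℝ → ℝ≥0∞) (p r : ℝ≥0∞) : ℝ≥0∞ :=
  if r = ∞ then ⨆ t : {t : ℝ // 0 < t}, ENNReal.ofReal (t.1 ^ p.toReal⁻¹) * R t.1
  else (∫⁻ t in Set.Ioi (0 : ℝ),
      (ENNReal.ofReal (t ^ p.toReal⁻¹) * R t) ^ r.toReal / ENNReal.ofReal t) ^ r.toReal⁻¹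

/-- The Lorentz quasi-norm `‖f‖_{L^{p,r}}`. -/
def lorentzNorm [MeasurableSpace X] (μ : Measure X) (p r : ℝ≥0∞) (f : X → ℝ) : ℝ≥0∞ :=
  lorentzNormOf (rearr μ f) p r

/-- The Lorentz norm `‖f‖*_{L^{p,r}}`, with `f*` replaced by `f**`. -/
def lorentzNormStar [MeasurableSpace X] (μ : Measure X) (p r : ℝ≥0∞) (f : X → ℝ) : ℝ≥0∞ :=
  lorentzNormOf (rearrStar μ f) p r

/-- The annuli `A_u`, `u ≥ -1`:  `A_{-1} = {x ∈ Ω : |x| < 1/2}` and, for `u ≥ 0`,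
`A_u = {x ∈ Ω : 2^{u-1} ≤ |x| < 2^u}`. -/
def annulus [Norm X] (Ω : Set X) (u : ℤ) : Set X :=
  if u = -1 then {x ∈ Ω | ‖x‖ < 1 / 2}
  else {x ∈ Ω | (2 : ℝ) ^ (u - 1) ≤ ‖x‖ ∧ ‖x‖ < (2 : ℝ) ^ u}

/-- The Herz-type functional built from a functional `L` on the blocks:
`(Σ_{u ≥ -1} (2^{ua} L(f χ_{A_u}))^q)^{1/q}` for `q < ∞`, with the sup-modification
for `q = ∞`. -/
def herzNormWith {E : Type*} [Norm X] [Zero E] (Ω : Set X) (a : ℝ) (q : ℝ≥0∞)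
    (L : (X → E) → ℝ≥0∞) (f : X → E) : ℝ≥0∞ :=
  if q = ∞ then
    ⨆ u : {u : ℤ // -1 ≤ u},
      ENNReal.ofReal ((2 : ℝ) ^ ((u.1 : ℝ) * a)) * L ((annulus Ω u.1).indicator f)
  else (∑' u : {u : ℤ // -1 ≤ u},
      (ENNReal.ofReal ((2 : ℝ) ^ ((u.1 : ℝ) * a)) * L ((annulus Ω u.1).indicator f)) ^ q.toReal)
      ^ q.toReal⁻¹

/-- The non-homogeneous Lorentz–Herz quasi-norm `‖f‖_{HL^{a,r}_{p,q}}`. -/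
def herzNorm [MeasurableSpace X] [Norm X] (μ : Measure X) (Ω : Set X) (a : ℝ)
    (p q r : ℝ≥0∞) (f : X → ℝ) : ℝ≥0∞ :=
  herzNormWith Ω a q (lorentzNorm μ p r) f

/-- The non-homogeneous Lorentz–Herz norm `‖f‖*_{HL^{a,r}_{p,q}}`, built from the
Lorentz norms `‖·‖*_{L^{p,r}}`. -/
def herzNormStar [MeasurableSpace X] [Norm X] (μ : Measure X) (Ω : Set X) (a : ℝ)
    (p q r : ℝ≥0∞) (f : X → ℝ) : ℝ≥0∞ :=
  herzNormWith Ω a q (lorentzNormStar μ p r) f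

/-- The conjugate exponent: `1/p + 1/p' = 1`, with `1' = ∞` and `∞' = 1`. -/
def conjExp (p : ℝ≥0∞) : ℝ≥0∞ :=
  if p = 1 then ∞ else if p = ∞ then 1 else ENNReal.ofReal (p.toReal / (p.toReal - 1))

/-- The quantity `(Σ_{u≥-1} (2^{ua} μ(A_u ∩ E)^{1/p})^q)^{(of the summands)}`,
i.e. `Σ_{u≥-1} 2^{uaq} μ(A_u ∩ E)^{q/p}` for `q < ∞`, with the sup-modification
for `q = ∞`. -/
def herzSetNorm [MeasurableSpace X] [Norm X] (μ : Measure X) (Ω : Set X) (a : ℝ)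
    (p q : ℝ≥0∞) (E : Set X) : ℝ≥0∞ :=
  if q = ∞ then
    ⨆ u : {u : ℤ // -1 ≤ u},
      ENNReal.ofReal ((2 : ℝ) ^ ((u.1 : ℝ) * a)) * μ (annulus Ω u.1 ∩ E) ^ p.toReal⁻¹
  else ∑' u : {u : ℤ // -1 ≤ u},
      (ENNReal.ofReal ((2 : ℝ) ^ ((u.1 : ℝ) * a)) * μ (annulus Ω u.1 ∩ E) ^ p.toReal⁻¹) ^ q.toReal

/-- The Peetre K-functional for the couple of quasi-normed function spaces
determined by the functionals `n₀`, `n₁`. -/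
def Kfun [MeasurableSpace X] (n₀ n₁ : (X → ℝ) → ℝ≥0∞) (t : ℝ) (f : X → ℝ) : ℝ≥0∞ :=
  ⨅ (g : X → ℝ) (_ : Measurable g) (_ : Measurable (f - g)),
    n₀ g + ENNReal.ofReal t * n₁ (f - g)

/-- The real interpolation quasi-norm `‖f‖_{(X₀,X₁)_{θ,q}}`. -/
def interpNorm [MeasurableSpace X] (n₀ n₁ : (X → ℝ) → ℝ≥0∞) (θ : ℝ) (q : ℝ≥0∞)
    (f : X → ℝ) : ℝ≥0∞ :=
  if q = ∞ then ⨆ t : {t : ℝ // 0 < t}, ENNReal.ofReal (t.1 ^ (-θ)) * Kfun n₀ n₁ t.1 f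
  else (∫⁻ t in Set.Ioi (0 : ℝ),
      (ENNReal.ofReal (t ^ (-θ)) * Kfun n₀ n₁ t f) ^ q.toReal / ENNReal.ofReal t) ^ q.toReal⁻¹

/-- Membership in the sum `X₀ + X₁` of the couple determined by `n₀`, `n₁`. -/
def inSum [MeasurableSpace X] (n₀ n₁ : (X → ℝ) → ℝ≥0∞) (f : X → ℝ) : Prop :=
  ∃ g : X → ℝ, Measurable g ∧ Measurable (f - g) ∧ n₀ g < ∞ ∧ n₁ (f - g) < ∞

end
abbrev Euc (N : ℕ) : Type := EuclideanSpace ℝ (Fin N)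


/-! Dominated convergence, applied at three levels. If the block `F = f χ_{A_u}` has finite
norm `‖F‖*_{L^{p,r}}`, then every level set `{|F| > α}`, `α > 0`, has finite measure and
`∫_0^s F*` is finite for every `s`. The first fact gives `μ(E_n ∩ {|F| > α}) → 0`, hence
`(F χ_{E_n})*(t) → 0` for every `t > 0`. Dominating by `F*` on `(0, s]` gives
`(F χ_{E_n})**(s) → 0`; dominating by the integrand of `‖F‖*_{L^{p,r}}` on `(0, ∞)` gives
`‖F χ_{E_n}‖*_{L^{p,r}} → 0`; dominating by the terms of `‖f‖*_{HL^{a,r}_{p,q}}` on the sum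
over the annuli gives the theorem. -/

theorem ENNReal.tendsto_tsum_of_dominated_convergence {ι : Type*} {F : ℕ → ι → ℝ≥0∞}
    {f G : ι → ℝ≥0∞} (hG : ∑' i, G i ≠ ∞) (hle : ∀ n i, F n i ≤ G i)
    (hlim : ∀ i, Tendsto (fun n => F n i) atTop (𝓝 (f i))) :
    Tendsto (fun n => ∑' i, F n i) atTop (𝓝 (∑' i, f i)) := by
  let _ : MeasurableSpace ι := ⊤
  simp only [← lintegral_count' measurable_from_top]
  exact tendsto_lintegral_of_dominated_convergence G (fun _ => measurable_from_top)
    (fun n => ae_of_all _ (hle n)) (by rwa [lintegral_count' measurable_from_top])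
    (ae_of_all _ hlim)

theorem setLIntegral_inv_ofReal_Ioi_one_eq_top : ∫⁻ t in Ioi (1 : ℝ), (ENNReal.ofReal t)⁻¹ = ∞ := by
  by_contra h
  refine not_integrableOn_Ioi_inv (a := 1) ⟨measurable_inv.aestronglyMeasurable, ?_⟩
  rw [hasFiniteIntegral_iff_ofReal (ae_restrict_of_forall_mem measurableSet_Ioi
    fun t (ht : 1 < t) => inv_nonneg.2 (zero_le_one.trans ht.le))]
  rwa [setLIntegral_congr_fun measurableSet_Ioi fun t (ht : 1 < t) =>
    ENNReal.ofReal_inv_of_pos (zero_lt_one.trans ht), lt_top_iff_ne_top]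

theorem abs_indicator_le_abs_self {X : Type*} (s : Set X) (g : X → ℝ) (x : X) :
    |s.indicator g x| ≤ |g x| := by
  simpa only [Real.norm_eq_abs] using norm_indicator_le_norm_self g x

section Rearrangement

variable {X : Type*} [MeasurableSpace X] {μ : Measure X}

theorem rearr_antitone (f : X → ℝ) : Antitone (rearr μ f) := fun _ _ hst =>
  sInf_le_sInf fun _ hα => hα.trans (ENNReal.ofReal_le_ofReal hst)

theorem measurable_rearr (f : X → ℝ) : Measurable (rearr μ f) :=
  (rearr_antitone f).measurable

theorem rearr_le_rearr {g h : X → ℝ} (H : ∀ x, |g x| ≤ |h x|) : rearr μ g ≤ rearr μ h :=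
  fun _ => sInf_le_sInf fun _ hα =>
    (measure_mono fun x (hx : _ < _) => hx.trans_le (ENNReal.ofReal_le_ofReal (H x))).trans hα

theorem le_rearr_of_lt_measure {f : X → ℝ} {α : ℝ≥0∞} {s : ℝ}
    (h : ENNReal.ofReal s < μ {x | α < ENNReal.ofReal |f x|}) : α ≤ rearr μ f s := by
  refine le_sInf fun β hβ => ?_
  by_contra! hβα
  exact (measure_mono fun x (hx : α < _) => hβα.trans hx).trans hβ |>.not_gt h

theorem rearrStar_le_rearrStar {g h : X → ℝ} (H : ∀ x, |g x| ≤ |h x|) :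
    rearrStar μ g ≤ rearrStar μ h :=
  fun _ => mul_le_mul_right (lintegral_mono (rearr_le_rearr H)) _

theorem measurable_rearrStar (f : X → ℝ) : Measurable (rearrStar μ f) :=
  ENNReal.measurable_ofReal.inv.mul
    (Monotone.measurable fun _ _ hst => lintegral_mono_set (Ioc_subset_Ioc_right hst))

theorem le_rearrStar {f : X → ℝ} {c : ℝ≥0∞} {s : ℝ} (hs : 0 < s)
    (h : ∀ t ∈ Ioc 0 s, c ≤ rearr μ f t) : c ≤ rearrStar μ f s := by
  have hs' : ENNReal.ofReal s ≠ 0 := by simpa using hs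
  calc c = (ENNReal.ofReal s)⁻¹ * ∫⁻ _ in Ioc 0 s, c := by
        rw [setLIntegral_const, Real.volume_Ioc, sub_zero, mul_comm c, ← mul_assoc,
          ENNReal.inv_mul_cancel hs' ENNReal.ofReal_ne_top, one_mul]
    _ ≤ rearrStar μ f s := mul_le_mul_right (setLIntegral_mono' measurableSet_Ioc h) _

end Rearrangement

section LorentzFunctional

variable {R S : ℝ → ℝ≥0∞} {p r : ℝ≥0∞}

noncomputable def lorentzIntegrand (R : ℝ → ℝ≥0∞) (p r : ℝ≥0∞) (t : ℝ) : ℝ≥0∞ :=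
  (ENNReal.ofReal (t ^ p.toReal⁻¹) * R t) ^ r.toReal / ENNReal.ofReal t

theorem lorentzNormOf_eq_lintegral (hr : r ≠ ∞) :
    lorentzNormOf R p r = (∫⁻ t in Ioi 0, lorentzIntegrand R p r t) ^ r.toReal⁻¹ :=
  if_neg hr

theorem measurable_lorentzIntegrand (hR : Measurable R) :
    Measurable (lorentzIntegrand R p r) := by
  unfold lorentzIntegrand
  fun_prop

theorem lorentzIntegrand_mono (h : R ≤ S) : lorentzIntegrand R p r ≤ lorentzIntegrand S p r :=
  fun t => by unfold lorentzIntegrand; gcongr; exact h t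

theorem lorentzNormOf_mono (h : R ≤ S) : lorentzNormOf R p r ≤ lorentzNormOf S p r := by
  unfold lorentzNormOf
  split_ifs
  · exact iSup_mono fun t => by gcongr; exact h t
  · exact ENNReal.rpow_le_rpow (lintegral_mono (lorentzIntegrand_mono h)) (by positivity)

theorem lintegral_lorentzIntegrand_ne_top (hr0 : r ≠ 0) (hr : r ≠ ∞)
    (h : lorentzNormOf R p r < ∞) : ∫⁻ t in Ioi 0, lorentzIntegrand R p r t ≠ ∞ := by
  rw [lorentzNormOf_eq_lintegral hr,
    ENNReal.rpow_lt_top_iff_of_pos (inv_pos.2 (toReal_pos hr0 hr))] at h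
  exact h.ne

theorem tendsto_lorentzNormOf_zero {Rn : ℕ → ℝ → ℝ≥0∞} (hr0 : r ≠ 0) (hr : r ≠ ∞)
    (hmeas : ∀ n, Measurable (Rn n)) (hle : ∀ n, Rn n ≤ R) (hR : lorentzNormOf R p r < ∞)
    (hlim : ∀ t, 0 < t → Tendsto (fun n => Rn n t) atTop (𝓝 0)) :
    Tendsto (fun n => lorentzNormOf (Rn n) p r) atTop (𝓝 0) := by
  have hrr := toReal_pos hr0 hr
  have hpointwise : ∀ t, 0 < t → Tendsto (fun n => lorentzIntegrand (Rn n) p r t) atTop (𝓝 0) :=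
    fun t ht => by
      simpa [lorentzIntegrand, zero_rpow_of_pos hrr] using
        ENNReal.Tendsto.div_const ((ENNReal.Tendsto.const_mul (hlim t ht)
          (Or.inr ofReal_ne_top)).ennrpow_const r.toReal) (Or.inr (by simpa using ht))
  have hint : Tendsto (fun n => ∫⁻ t in Ioi 0, lorentzIntegrand (Rn n) p r t) atTop (𝓝 0) := by
    simpa using tendsto_lintegral_of_dominated_convergence _
      (fun n => measurable_lorentzIntegrand (hmeas n))
      (fun n => ae_of_all _ (lorentzIntegrand_mono (hle n)))
      (lintegral_lorentzIntegrand_ne_top hr0 hr hR)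
      (ae_restrict_of_forall_mem measurableSet_Ioi hpointwise)
  simpa [lorentzNormOf_eq_lintegral hr, zero_rpow_of_pos (inv_pos.2 hrr)] using
    hint.ennrpow_const r.toReal⁻¹

end LorentzFunctional

section LorentzStar

variable {X : Type*} [MeasurableSpace X] {μ : Measure X} {p r : ℝ≥0∞} {f : X → ℝ}

theorem lorentzNormStar_mono {g h : X → ℝ} (H : ∀ x, |g x| ≤ |h x|) :
    lorentzNormStar μ p r g ≤ lorentzNormStar μ p r h :=
  lorentzNormOf_mono (rearrStar_le_rearrStar H)

theorem setLIntegral_rearr_ne_top (hr0 : r ≠ 0) (hr : r ≠ ∞)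
    (hf : lorentzNormStar μ p r f < ∞) (s : ℝ) : ∫⁻ t in Ioc 0 s, rearr μ f t ≠ ∞ := by
  intro hinf
  have hs : 0 < s := by
    by_contra! hs
    simp [Ioc_eq_empty (not_lt.2 hs)] at hinf
  -- beyond `s` the average `f**` is infinite, hence so is the integrand of `‖f‖*`
  have hstar : ∀ t, s ≤ t → rearrStar μ f t = ∞ := fun t hst => by
    have hinf_t : ∫⁻ u in Ioc 0 t, rearr μ f u = ∞ :=
      top_unique (hinf.symm.le.trans (lintegral_mono_set (Ioc_subset_Ioc_right hst)))
    rw [rearrStar, hinf_t, mul_top (by simp)]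
  refine lintegral_lorentzIntegrand_ne_top hr0 hr hf (eq_top_iff.2 ?_)
  calc ∞ = ∫⁻ _ in Ioi s, ∞ := by simp
    _ ≤ ∫⁻ t in Ioi s, lorentzIntegrand (rearrStar μ f) p r t :=
        setLIntegral_mono' measurableSet_Ioi fun t (ht : s < t) => by
          rw [lorentzIntegrand, hstar t ht.le,
            mul_top (by simpa using Real.rpow_pos_of_pos (hs.trans ht) _),
            top_rpow_of_pos (toReal_pos hr0 hr), top_div_of_ne_top ofReal_ne_top]
    _ ≤ _ := lintegral_mono_set (Ioi_subset_Ioi hs.le)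

theorem measure_lt_abs_ne_top (hr0 : r ≠ 0) (hr : r ≠ ∞) (hf : lorentzNormStar μ p r f < ∞)
    {α : ℝ≥0∞} (hα : α ≠ 0) : μ {x | α < ENNReal.ofReal |f x|} ≠ ∞ := by
  intro hinf
  have hstar : ∀ t, 0 < t → α ≤ rearrStar μ f t := fun t ht =>
    le_rearrStar ht fun u _ => le_rearr_of_lt_measure (hinf ▸ ofReal_lt_top)
  -- for `t > 1` the integrand of `‖f‖*` is at least `α^r / t`, which is not integrable
  refine lintegral_lorentzIntegrand_ne_top hr0 hr hf (eq_top_iff.2 ?_)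
  calc ∞ = α ^ r.toReal * ∫⁻ t in Ioi 1, (ENNReal.ofReal t)⁻¹ := by
        rw [setLIntegral_inv_ofReal_Ioi_one_eq_top,
          mul_top ((rpow_eq_zero_iff_of_pos (toReal_pos hr0 hr)).not.2 hα)]
    _ = ∫⁻ t in Ioi 1, α ^ r.toReal * (ENNReal.ofReal t)⁻¹ :=
        (lintegral_const_mul _ ENNReal.measurable_ofReal.inv).symm
    _ ≤ ∫⁻ t in Ioi 1, lorentzIntegrand (rearrStar μ f) p r t :=
        setLIntegral_mono' measurableSet_Ioi fun t (ht : 1 < t) => by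
          rw [lorentzIntegrand, div_eq_mul_inv]
          gcongr
          calc α = 1 * α := (one_mul α).symm
            _ ≤ _ := mul_le_mul' (ENNReal.one_le_ofReal.2 (Real.one_le_rpow ht.le
              (by positivity))) (hstar t (zero_lt_one.trans ht))
    _ ≤ _ := lintegral_mono_set (Ioi_subset_Ioi zero_le_one)

variable {E : ℕ → Set X}

theorem tendsto_measure_inter_of_ae_eventually_notMem (hE : ∀ n, MeasurableSet (E n))
    (hE0 : ∀ᵐ x ∂μ, ∀ᶠ n in atTop, x ∉ E n) {S : Set X} (hS : μ S ≠ ∞) :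
    Tendsto (fun n => μ (E n ∩ S)) atTop (𝓝 0) := by
  set T := toMeasurable μ S
  have hT : MeasurableSet T := measurableSet_toMeasurable μ S
  have hdct : Tendsto (fun n => ∫⁻ x, (E n ∩ T).indicator 1 x ∂μ) atTop (𝓝 0) := by
    simpa using tendsto_lintegral_of_dominated_convergence (f := fun _ => 0) (T.indicator 1)
      (fun n => measurable_one.indicator ((hE n).inter hT))
      (fun n => ae_of_all _ (indicator_le_indicator_of_subset inter_subset_right fun _ => zero_le))
      (by rwa [lintegral_indicator_one hT, measure_toMeasurable])
      (by
        filter_upwards [hE0] with x hx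
        exact tendsto_const_nhds.congr' (hx.mono fun n hn =>
          (indicator_of_notMem (fun h => hn h.1) _).symm))
  simp only [lintegral_indicator_one ((hE _).inter hT)] at hdct
  exact tendsto_of_tendsto_of_tendsto_of_le_of_le tendsto_const_nhds hdct (fun _ => zero_le)
    fun n => measure_mono (inter_subset_inter_right _ (subset_toMeasurable μ S))

theorem tendsto_rearr_indicator_zero (hf : ∀ α ≠ 0, μ {x | α < ENNReal.ofReal |f x|} ≠ ∞)
    (hE : ∀ n, MeasurableSet (E n)) (hE0 : ∀ᵐ x ∂μ, ∀ᶠ n in atTop, x ∉ E n) {t : ℝ}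
    (ht : 0 < t) : Tendsto (fun n => rearr μ ((E n).indicator f) t) atTop (𝓝 0) := by
  rw [ENNReal.tendsto_nhds_zero]
  intro ε hε
  filter_upwards [(tendsto_measure_inter_of_ae_eventually_notMem hE hE0
    (hf ε hε.ne')).eventually_lt_const (ofReal_pos.2 ht)] with n hn
  refine sInf_le ((measure_mono fun x hx => ?_).trans hn.le)
  by_cases hxE : x ∈ E n
  · exact ⟨hxE, by simpa [indicator_of_mem hxE] using hx⟩
  · simp [indicator_of_notMem hxE] at hx

theorem tendsto_rearrStar_zero_of_dominated {g : ℕ → X → ℝ} (hle : ∀ n x, |g n x| ≤ |f x|)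
    {s : ℝ} (hs : 0 < s) (hint : ∫⁻ t in Ioc 0 s, rearr μ f t ≠ ∞)
    (hlim : ∀ t, 0 < t → Tendsto (fun n => rearr μ (g n) t) atTop (𝓝 0)) :
    Tendsto (fun n => rearrStar μ (g n) s) atTop (𝓝 0) := by
  have hdct : Tendsto (fun n => ∫⁻ t in Ioc 0 s, rearr μ (g n) t) atTop (𝓝 0) := by
    simpa using tendsto_lintegral_of_dominated_convergence (rearr μ f)
      (fun n => measurable_rearr _) (fun n => ae_of_all _ (rearr_le_rearr (hle n))) hint
      (ae_restrict_of_forall_mem measurableSet_Ioc fun t ht => hlim t ht.1)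
  simpa [rearrStar] using ENNReal.Tendsto.const_mul hdct (Or.inr (by simpa using hs))

theorem tendsto_lorentzNormStar_indicator_zero (hr0 : r ≠ 0) (hr : r ≠ ∞)
    (hf : lorentzNormStar μ p r f < ∞) (hE : ∀ n, MeasurableSet (E n))
    (hE0 : ∀ᵐ x ∂μ, ∀ᶠ n in atTop, x ∉ E n) :
    Tendsto (fun n => lorentzNormStar μ p r ((E n).indicator f)) atTop (𝓝 0) := by
  have hle : ∀ n x, |(E n).indicator f x| ≤ |f x| := fun n => abs_indicator_le_abs_self _ f
  refine tendsto_lorentzNormOf_zero hr0 hr (fun n => measurable_rearrStar _)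
    (fun n => rearrStar_le_rearrStar (hle n)) hf fun s hs => ?_
  exact tendsto_rearrStar_zero_of_dominated hle hs (setLIntegral_rearr_ne_top hr0 hr hf s)
    fun t ht => tendsto_rearr_indicator_zero (fun α hα => measure_lt_abs_ne_top hr0 hr hf hα)
      hE hE0 ht

end LorentzStar

section Herz

variable {X E : Type*} [Norm X] [Zero E] {Ω : Set X} {a : ℝ} {q : ℝ≥0∞}
  {L : (X → E) → ℝ≥0∞} {f : X → E}

theorem tsum_herzNormWith_ne_top (hq0 : q ≠ 0) (hq : q ≠ ∞) (hf : herzNormWith Ω a q L f < ∞) :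
    ∑' u : {u : ℤ // -1 ≤ u},
      (ENNReal.ofReal ((2 : ℝ) ^ ((u.1 : ℝ) * a)) * L ((annulus Ω u.1).indicator f)) ^ q.toReal
      ≠ ∞ := by
  rw [herzNormWith, if_neg hq, rpow_lt_top_iff_of_pos (inv_pos.2 (toReal_pos hq0 hq))] at hf
  exact hf.ne

theorem lt_top_of_herzNormWith_lt_top (hq0 : q ≠ 0) (hq : q ≠ ∞)
    (hf : herzNormWith Ω a q L f < ∞) {u : ℤ} (hu : -1 ≤ u) :
    L ((annulus Ω u).indicator f) < ∞ := by
  have hterm := ENNReal.lt_top_of_tsum_ne_top (tsum_herzNormWith_ne_top hq0 hq hf) ⟨u, hu⟩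
  rw [rpow_lt_top_iff_of_pos (toReal_pos hq0 hq)] at hterm
  exact lt_top_of_mul_ne_top_right hterm.ne (by simpa using Real.rpow_pos_of_pos two_pos _)

theorem tendsto_herzNormWith_zero (hq0 : q ≠ 0) (hq : q ≠ ∞) {g : ℕ → X → E}
    (hf : herzNormWith Ω a q L f < ∞)
    (hle : ∀ n u, L ((annulus Ω u).indicator (g n)) ≤ L ((annulus Ω u).indicator f))
    (hlim : ∀ u, -1 ≤ u → Tendsto (fun n => L ((annulus Ω u).indicator (g n))) atTop (𝓝 0)) :
    Tendsto (fun n => herzNormWith Ω a q L (g n)) atTop (𝓝 0) := by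
  have hqq := toReal_pos hq0 hq
  have hsum := ENNReal.tendsto_tsum_of_dominated_convergence (tsum_herzNormWith_ne_top hq0 hq hf)
    (fun n u => by gcongr; exact hle n u) fun u =>
      (ENNReal.Tendsto.const_mul (hlim u u.2) (Or.inr ofReal_ne_top)).ennrpow_const q.toReal
  simpa [herzNormWith, hq, zero_rpow_of_pos hqq, zero_rpow_of_pos (inv_pos.2 hqq)] using
    hsum.ennrpow_const q.toReal⁻¹

end Herz

theorem lorentzHerz_abs_continuous_general {N : ℕ}
    (Ω : Set (Euc N))
    (a : ℝ) (p q r : ℝ≥0∞)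
    (hq1 : 1 ≤ q) (hq : q ≠ ∞) (hr1 : 1 ≤ r) (hr : r ≠ ∞)
    (f : Euc N → ℝ)
    (hfin : herzNormStar volume Ω a p q r f < ∞)
    (E : ℕ → Set (Euc N)) (hE : ∀ n, MeasurableSet (E n))
    (hE0 : ∀ᵐ x ∂volume, Filter.Tendsto
      (fun n => (E n).indicator (fun _ => (1 : ℝ)) x) Filter.atTop (nhds 0)) :
    Filter.Tendsto (fun n => herzNormStar volume Ω a p q r ((E n).indicator f))
      Filter.atTop (nhds 0) := by
  have hq0 : q ≠ 0 := (one_pos.trans_le hq1).ne'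
  have hr0 : r ≠ 0 := (one_pos.trans_le hr1).ne'
  have hE0' : ∀ᵐ x ∂volume, ∀ᶠ n in atTop, x ∉ E n := by
    filter_upwards [hE0] with x hx
    exact (hx.eventually_lt_const one_pos).mono fun n hn hxE => by
      simp [indicator_of_mem hxE] at hn
  have hcomm : ∀ n u, (annulus Ω u).indicator ((E n).indicator f) =
      (E n).indicator ((annulus Ω u).indicator f) := by
    simp only [indicator_indicator, inter_comm, implies_true]
  refine tendsto_herzNormWith_zero hq0 hq hfin (fun n u => ?_) fun u hu => ?_
  · rw [hcomm]
    exact lorentzNormStar_mono (abs_indicator_le_abs_self _ _)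
  · simpa only [hcomm] using tendsto_lorentzNormStar_indicator_zero hr0 hr
      (lt_top_of_herzNormWith_lt_top hq0 hq hfin hu) hE hE0'

/-- For `a ∈ ℝ`, `1 < p < ∞` and `1 ≤ q, r < ∞`, the norm
`‖·‖*_{HL^{a,r}_{p,q}}` is absolutely continuous: if `‖f‖* < ∞` and `(E_n)` is a
sequence of measurable subsets of `Ω` whose indicator functions tend to `0`
pointwise a.e., then `‖f χ_{E_n}‖*_{HL^{a,r}_{p,q}} → 0`. -/
theorem lorentzHerz_abs_continuous {N : ℕ} (hN : 1 ≤ N)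
    (Ω : Set (Euc N)) (hΩ : MeasurableSet Ω)
    (a : ℝ) (p q r : ℝ≥0∞) (hp1 : 1 < p) (hp : p ≠ ∞)
    (hq1 : 1 ≤ q) (hq : q ≠ ∞) (hr1 : 1 ≤ r) (hr : r ≠ ∞)
    (f : Euc N → ℝ) (hf : Measurable f)
    (hfin : herzNormStar volume Ω a p q r f < ∞)
    (E : ℕ → Set (Euc N)) (hE : ∀ n, MeasurableSet (E n)) (hEΩ : ∀ n, E n ⊆ Ω)
    (hE0 : ∀ᵐ x ∂volume, Filter.Tendsto
      (fun n => (E n).indicator (fun _ => (1 : ℝ)) x) Filter.atTop (nhds 0)) :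
    Filter.Tendsto (fun n => herzNormStar volume Ω a p q r ((E n).indicator f))
      Filter.atTop (nhds 0) :=
  lorentzHerz_abs_continuous_general Ω a p q r hq1 hq hr1 hr f hfin E hE hE0
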